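/- Let g : ℝ^p → [0,∞) be differentiable and h : ℝ^p → [0,∞) subdifferentiable. Let x ∈ ℝ^p and r > 0 with g r-CL at x (4g(x) < r²χ(g,x,r)), let ε ∈ (0,1) and set r' := εr. Assume there is y ∈ B̄(x, r') with g(y) ≠ 0, and define g̲ := inf{g(y) : y ∈ B̄(x, r'), g(y) ≠ 0}, ḡ := sup_{y ∈ B̄(x,r')} g(y), h̄ := sup_{y ∈ B̄(x,r')} h(y), L := sup{‖z‖₂ : z ∈ ∂h(y), y ∈ B̄(x,r)}; assume ḡ, h̄, L are finite with L > 0 and h(x) > 0 (so h̄ > 0). Set A := 4g(x)·ḡ, B := 4g(x)·h̄ + 4h(x)·ḡ, Cc := 4h(x)·h̄, D := (1/2)·r'²·χ(g,x,r)·g̲, and Δ := B² − 4Cc(A − D). Then Δ ≥ 0, and for every β with 0 < β < min{ √(g̲·χ(g,x,r))/(4L), (√Δ − B)/(2Cc) }, the function f := g + βh satisfies 4f(x) < r'²·χ(f, x, r', g), where χ(f, x, r', g) := inf{ (inf_{z ∈ ∂h(y)} ‖∇g(y) + βz‖₂²)/f(y) : y ∈ B̄(x, r'), g(y) ≠ 0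 }. If in addition f(y) = 0 whenever g(y) = 0 for y ∈ B̄(x, r'), then f is r'-CL at x: 4f(x) < r'²·χ(f, x, r'). -/

import Mathlib

open Metric

/-- `z` is a subgradient of `h` at `x`. -/
def IsSubgradientAt {p : ℕ} (h : EuclideanSpace ℝ (Fin p) → ℝ)
    (z x : EuclideanSpace ℝ (Fin p)) : Prop :=
  ∀ y, h x + (inner ℝ z (y - x) : ℝ) ≤ h y

/-- The Chatterjee–Łojasiewicz constant of a differentiable function `g` (with gradient `G`)
at `x₀` with radius `r`. -/
noncomputable def chiCL {p : ℕ} (g : EuclideanSpace ℝ (Fin p) → ℝ)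
    (G : EuclideanSpace ℝ (Fin p) → EuclideanSpace ℝ (Fin p))
    (x₀ : EuclideanSpace ℝ (Fin p)) (r : ℝ) : ℝ :=
  sInf {s | ∃ y ∈ Metric.closedBall x₀ r, g y ≠ 0 ∧ s = ‖G y‖ ^ 2 / g y}

/-- The Chatterjee–Łojasiewicz constant of `f = g + βh` at `x` with radius `r'`, where the
subgradients of `f` are the vectors `∇g(y) + βz` with `z ∈ ∂h(y)`; the infimum ranges over
the points of the ball where `q` does not vanish (`q = g` gives `χ(f,x,r',g)`, while
`q = f` gives `χ(f,x,r')`). -/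
noncomputable def chiReg {p : ℕ} (g h : EuclideanSpace ℝ (Fin p) → ℝ)
    (G : EuclideanSpace ℝ (Fin p) → EuclideanSpace ℝ (Fin p)) (β : ℝ)
    (q : EuclideanSpace ℝ (Fin p) → ℝ)
    (x : EuclideanSpace ℝ (Fin p)) (r' : ℝ) : ℝ :=
  sInf {s | ∃ y ∈ Metric.closedBall x r', q y ≠ 0 ∧
    s = sInf {t | ∃ z, IsSubgradientAt h z y ∧ t = ‖G y + β • z‖ ^ 2} / (g y + β * h y)}

/-!
Write `f = g + βh` and `χ = χ(g, x, r)`. On the small ball `‖∇g(y)‖² ≥ χ g(y) ≥ χ g̲`, and the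
first bound on `β` keeps the perturbation `βz` (with `‖z‖ ≤ L`) below a quarter of `√(χ g̲)`,
so every subgradient `∇g(y) + βz` of `f` has squared norm at least `χ g̲ / 2`. As `f ≤ ḡ + βh̄`
on the ball, `χ(f, x, r', g) ≥ χ g̲ / (2(ḡ + βh̄))`, and the claim reduces to
`4 f(x) (ḡ + βh̄) < r'² χ g̲ / 2`, that is to `Cc β² + B β + (A - D) < 0`, which holds for `β`
below the positive root of this quadratic.
-/

theorem half_sq_le_norm_add_sq {E : Type*} [SeminormedAddGroup E] {u v : E} {c : ℝ}
    (hu : c ≤ ‖u‖) (hv : ‖v‖ ≤ c / 4) : c ^ 2 / 2 ≤ ‖u + v‖ ^ 2 := by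
  have hc : 0 ≤ c := by linarith [norm_nonneg v]
  have h34 : 3 / 4 * c ≤ ‖u + v‖ := by linarith [norm_le_add_norm_add u v]
  nlinarith [mul_le_mul h34 h34 (by positivity) (norm_nonneg _)]

theorem quadratic_neg_of_lt_root {a b c x : ℝ} (ha : 0 < a) (hx : 0 ≤ 2 * a * x + b)
    (hlt : x < (√(discrim a b c) - b) / (2 * a)) : a * (x * x) + b * x + c < 0 := by
  have hroot : 2 * a * x + b < √(discrim a b c) := by
    rw [lt_div_iff₀ (by positivity)] at hlt
    linarith
  have hsq : (2 * a * x + b) ^ 2 < b ^ 2 - 4 * a * c := (Real.lt_sqrt hx).1 hroot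
  nlinarith

section ChatterjeeLojasiewicz

variable {p : ℕ} {g h q : EuclideanSpace ℝ (Fin p) → ℝ}
  {G : EuclideanSpace ℝ (Fin p) → EuclideanSpace ℝ (Fin p)} {x y : EuclideanSpace ℝ (Fin p)}
  {r β c m M : ℝ}

theorem chiCL_nonneg (hg : ∀ y, 0 ≤ g y) : 0 ≤ chiCL g G x r :=
  Real.sInf_nonneg (by rintro _ ⟨y, -, -, rfl⟩; exact div_nonneg (sq_nonneg _) (hg y))

theorem chiCL_mul_le_norm_sq (hg : ∀ y, 0 ≤ g y) (hy : y ∈ closedBall x r) (hgy : g y ≠ 0) :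
    chiCL g G x r * g y ≤ ‖G y‖ ^ 2 := by
  rw [← le_div_iff₀ ((hg y).lt_of_ne' hgy)]
  refine csInf_le ⟨0, ?_⟩ ⟨y, hy, hgy, rfl⟩
  rintro _ ⟨y, -, -, rfl⟩
  exact div_nonneg (sq_nonneg _) (hg y)

theorem mul_chiCL_div_two_le_norm_add_sq (hg : ∀ y, 0 ≤ g y) (hy : y ∈ closedBall x r)
    (hgy : g y ≠ 0) (hm : 0 ≤ m) (hmy : m ≤ g y) {v : EuclideanSpace ℝ (Fin p)}
    (hv : ‖v‖ ≤ √(m * chiCL g G x r) / 4) :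
    m * chiCL g G x r / 2 ≤ ‖G y + v‖ ^ 2 := by
  have hχ := chiCL_nonneg (G := G) (x := x) (r := r) hg
  have hGy : √(m * chiCL g G x r) ≤ ‖G y‖ := by
    refine Real.sqrt_le_iff.2 ⟨norm_nonneg _, ?_⟩
    calc m * chiCL g G x r ≤ g y * chiCL g G x r := mul_le_mul_of_nonneg_right hmy hχ
      _ = chiCL g G x r * g y := mul_comm _ _
      _ ≤ ‖G y‖ ^ 2 := chiCL_mul_le_norm_sq hg hy hgy
  simpa [Real.sq_sqrt (mul_nonneg hm hχ)] using half_sq_le_norm_add_sq hGy hv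

theorem div_le_chiReg (hne : ∃ y ∈ closedBall x r, q y ≠ 0)
    (hsub : ∀ y ∈ closedBall x r, ∃ z, IsSubgradientAt h z y) (hc : 0 ≤ c)
    (hpos : ∀ y ∈ closedBall x r, q y ≠ 0 → 0 < g y + β * h y)
    (hM : ∀ y ∈ closedBall x r, g y + β * h y ≤ M)
    (hgrad : ∀ y ∈ closedBall x r, q y ≠ 0 → ∀ z, IsSubgradientAt h z y →
      c ≤ ‖G y + β • z‖ ^ 2) :
    c / M ≤ chiReg g h G β q x r := by
  obtain ⟨y₀, hy₀, hq₀⟩ := hne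
  refine le_csInf ⟨_, y₀, hy₀, hq₀, rfl⟩ ?_
  rintro _ ⟨y, hy, hqy, rfl⟩
  obtain ⟨z₀, hz₀⟩ := hsub y hy
  have hinf : c ≤ sInf {t | ∃ z, IsSubgradientAt h z y ∧ t = ‖G y + β • z‖ ^ 2} := by
    refine le_csInf ⟨_, z₀, hz₀, rfl⟩ ?_
    rintro _ ⟨z, hz, rfl⟩
    exact hgrad y hy hqy z hz
  exact div_le_div₀ (hc.trans hinf) hinf (hpos y hy hqy) (hM y hy)

theorem chiReg_le_chiReg {q₁ q₂ : EuclideanSpace ℝ (Fin p) → ℝ}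
    (hden : ∀ y ∈ closedBall x r, 0 ≤ g y + β * h y)
    (hq : ∀ y ∈ closedBall x r, q₂ y ≠ 0 → q₁ y ≠ 0)
    (hne : ∃ y ∈ closedBall x r, q₂ y ≠ 0) :
    chiReg g h G β q₁ x r ≤ chiReg g h G β q₂ x r := by
  obtain ⟨y₀, hy₀, hq₀⟩ := hne
  refine csInf_le_csInf ⟨0, ?_⟩ ⟨_, y₀, hy₀, hq₀, rfl⟩ ?_
  · rintro _ ⟨y, hy, -, rfl⟩
    exact div_nonneg (Real.sInf_nonneg (by rintro _ ⟨z, -, rfl⟩; positivity)) (hden y hy)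
  · rintro _ ⟨y, hy, hqy, rfl⟩
    exact ⟨y, hy, hq y hy hqy, rfl⟩

end ChatterjeeLojasiewicz

theorem cl_stability_under_perturbation_general
    {p : ℕ} (g h : EuclideanSpace ℝ (Fin p) → ℝ)
    (G : EuclideanSpace ℝ (Fin p) → EuclideanSpace ℝ (Fin p))
    (hg_nonneg : ∀ x, 0 ≤ g x) (hh_nonneg : ∀ x, 0 ≤ h x)
    (hh_sub : ∀ y, ∃ z, IsSubgradientAt h z y)
    (x : EuclideanSpace ℝ (Fin p)) (r : ℝ) (hr : 0 < r)
    (ε : ℝ) (hε1 : ε < 1)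
    (r' : ℝ) (hr' : r' = ε * r)
    (hy : ∃ y ∈ closedBall x r', g y ≠ 0)
    (gl gu hu LL : ℝ)
    (hgl : gl = sInf {s | ∃ y ∈ closedBall x r', g y ≠ 0 ∧ s = g y})
    (hgu : gu = sSup (g '' closedBall x r'))
    (hhu : hu = sSup (h '' closedBall x r'))
    (hLL : LL = sSup {s | ∃ y ∈ closedBall x r, ∃ z, IsSubgradientAt h z y ∧ s = ‖z‖})
    (hbddg : BddAbove (g '' closedBall x r'))
    (hbddh : BddAbove (h '' closedBall x r'))
    (hbddL : BddAbove {s | ∃ y ∈ closedBall x r, ∃ z, IsSubgradientAt h z y ∧ s = ‖z‖})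
    (hLpos : 0 < LL) (hhx : 0 < h x)
    (A B Cc D Δ : ℝ)
    (hA : A = 4 * g x * gu) (hB : B = 4 * g x * hu + 4 * h x * gu)
    (hCc : Cc = 4 * h x * hu) (hD : D = (1 / 2) * r' ^ 2 * chiCL g G x r * gl)
    (hΔ : Δ = B ^ 2 - 4 * Cc * (A - D)) :
    0 ≤ Δ ∧
    ∀ β : ℝ, 0 < β →
      β < min (Real.sqrt (gl * chiCL g G x r) / (4 * LL)) ((Real.sqrt Δ - B) / (2 * Cc)) →
      4 * (g x + β * h x) < r' ^ 2 * chiReg g h G β g x r' ∧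
      ((∀ y ∈ closedBall x r', g y = 0 → g y + β * h y = 0) →
        4 * (g x + β * h x) < r' ^ 2 *
          chiReg g h G β (fun y => g y + β * h y) x r') := by
  obtain ⟨y₀, hy₀, hgy₀⟩ := hy
  set χ := chiCL g G x r
  have hr'_nonneg : 0 ≤ r' := dist_nonneg.trans hy₀
  have hball : closedBall x r' ⊆ closedBall x r := closedBall_subset_closedBall (by nlinarith)
  have hχ : 0 ≤ χ := chiCL_nonneg hg_nonneg
  have hgl_nonneg : 0 ≤ gl :=
    hgl ▸ Real.sInf_nonneg (by rintro _ ⟨y, -, -, rfl⟩; exact hg_nonneg y)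
  have hgl_le : ∀ y ∈ closedBall x r', g y ≠ 0 → gl ≤ g y := fun y hy hgy =>
    hgl ▸ csInf_le ⟨0, by rintro _ ⟨y, -, -, rfl⟩; exact hg_nonneg y⟩ ⟨y, hy, hgy, rfl⟩
  have hgu_ge : ∀ y ∈ closedBall x r', g y ≤ gu := fun y hy => hgu ▸ le_csSup hbddg ⟨y, hy, rfl⟩
  have hhu_ge : ∀ y ∈ closedBall x r', h y ≤ hu := fun y hy => hhu ▸ le_csSup hbddh ⟨y, hy, rfl⟩
  have hgu_pos : 0 < gu := ((hg_nonneg y₀).lt_of_ne' hgy₀).trans_le (hgu_ge y₀ hy₀)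
  have hhu_pos : 0 < hu := hhx.trans_le (hhu_ge x (mem_closedBall_self hr'_nonneg))
  have hCc_pos : 0 < Cc := by rw [hCc]; positivity
  have hB_nonneg : 0 ≤ B := by rw [hB]; have := hg_nonneg x; positivity
  refine ⟨?_, fun β hβ hβlt => ?_⟩
  · have hD_nonneg : 0 ≤ D := by rw [hD]; positivity
    have hΔ_eq : Δ = 16 * (g x * hu - h x * gu) ^ 2 + 4 * Cc * D := by
      rw [hΔ, hA, hB, hCc]
      ring
    rw [hΔ_eq]
    positivity
  obtain ⟨hβL, hβΔ⟩ := lt_min_iff.mp hβlt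
  have hf_pos : ∀ y, g y ≠ 0 → 0 < g y + β * h y := fun y hgy =>
    add_pos_of_pos_of_nonneg ((hg_nonneg y).lt_of_ne' hgy) (mul_nonneg hβ.le (hh_nonneg y))
  have hf_le : ∀ y ∈ closedBall x r', g y + β * h y ≤ gu + β * hu := fun y hy =>
    add_le_add (hgu_ge y hy) (mul_le_mul_of_nonneg_left (hhu_ge y hy) hβ.le)
  have hsubgrad : ∀ y ∈ closedBall x r', g y ≠ 0 → ∀ z, IsSubgradientAt h z y →
      gl * χ / 2 ≤ ‖G y + β • z‖ ^ 2 := by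
    intro y hy hgy z hz
    refine mul_chiCL_div_two_le_norm_add_sq hg_nonneg (hball hy) hgy hgl_nonneg
      (hgl_le y hy hgy) ?_
    have hzL : ‖z‖ ≤ LL := hLL ▸ le_csSup hbddL ⟨y, hball hy, z, hz, rfl⟩
    rw [lt_div_iff₀ (by positivity)] at hβL
    calc ‖β • z‖ = β * ‖z‖ := by rw [norm_smul, Real.norm_of_nonneg hβ.le]
      _ ≤ β * LL := by gcongr
      _ ≤ √(gl * χ) / 4 := by linarith
  have hquad : 4 * (g x + β * h x) * (gu + β * hu) < r' ^ 2 * (gl * χ / 2) := by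
    have := quadratic_neg_of_lt_root hCc_pos (by positivity) (hΔ ▸ hβΔ)
    rw [hA, hB, hCc, hD] at this
    linear_combination this
  have hfirst : 4 * (g x + β * h x) < r' ^ 2 * chiReg g h G β g x r' := calc
    4 * (g x + β * h x) < r' ^ 2 * (gl * χ / 2 / (gu + β * hu)) := by
      rw [← mul_div_assoc, lt_div_iff₀ (by positivity)]
      exact hquad
    _ ≤ r' ^ 2 * chiReg g h G β g x r' := by
      gcongr
      exact div_le_chiReg ⟨y₀, hy₀, hgy₀⟩ (fun y _ => hh_sub y) (by positivity)
        (fun y _ => hf_pos y) hf_le hsubgrad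
  refine ⟨hfirst, fun hzero => hfirst.trans_le ?_⟩
  gcongr
  exact chiReg_le_chiReg
    (fun y _ => add_nonneg (hg_nonneg y) (mul_nonneg hβ.le (hh_nonneg y)))
    (fun y hy hfy hgy => hfy (hzero y hy hgy)) ⟨y₀, hy₀, (hf_pos y₀ hgy₀).ne'⟩

/-- stability of the Chatterjee–Łojasiewicz inequality under a subdifferentiable
perturbation: if `g` is `r`-CL at `x`, then for sufficiently small `β > 0` the function
`f = g + βh` is `εr`-CL at `x` (first with respect to `g`, and genuinely so when the zeros of
`g` in the small ball are zeros of `f`). -/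
theorem cl_stability_under_perturbation
    {p : ℕ} (g h : EuclideanSpace ℝ (Fin p) → ℝ)
    (G : EuclideanSpace ℝ (Fin p) → EuclideanSpace ℝ (Fin p))
    (hg_nonneg : ∀ x, 0 ≤ g x) (hh_nonneg : ∀ x, 0 ≤ h x)
    (hgrad : ∀ x, HasGradientAt g (G x) x)
    (hh_sub : ∀ y, ∃ z, IsSubgradientAt h z y)
    (x : EuclideanSpace ℝ (Fin p)) (r : ℝ) (hr : 0 < r)
    (hCL : 4 * g x < r ^ 2 * chiCL g G x r)
    (ε : ℝ) (hε0 : 0 < ε) (hε1 : ε < 1)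
    (r' : ℝ) (hr' : r' = ε * r)
    (hy : ∃ y ∈ closedBall x r', g y ≠ 0)
    (gl gu hu LL : ℝ)
    (hgl : gl = sInf {s | ∃ y ∈ closedBall x r', g y ≠ 0 ∧ s = g y})
    (hgu : gu = sSup (g '' closedBall x r'))
    (hhu : hu = sSup (h '' closedBall x r'))
    (hLL : LL = sSup {s | ∃ y ∈ closedBall x r, ∃ z, IsSubgradientAt h z y ∧ s = ‖z‖})
    (hbddg : BddAbove (g '' closedBall x r'))
    (hbddh : BddAbove (h '' closedBall x r'))
    (hbddL : BddAbove {s | ∃ y ∈ closedBall x r, ∃ z, IsSubgradientAt h z y ∧ s = ‖z‖})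
    (hLpos : 0 < LL) (hhx : 0 < h x)
    (A B Cc D Δ : ℝ)
    (hA : A = 4 * g x * gu) (hB : B = 4 * g x * hu + 4 * h x * gu)
    (hCc : Cc = 4 * h x * hu) (hD : D = (1 / 2) * r' ^ 2 * chiCL g G x r * gl)
    (hΔ : Δ = B ^ 2 - 4 * Cc * (A - D)) :
    0 ≤ Δ ∧
    ∀ β : ℝ, 0 < β →
      β < min (Real.sqrt (gl * chiCL g G x r) / (4 * LL)) ((Real.sqrt Δ - B) / (2 * Cc)) →
      4 * (g x + β * h x) < r' ^ 2 * chiReg g h G β g x r' ∧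
      ((∀ y ∈ closedBall x r', g y = 0 → g y + β * h y = 0) →
        4 * (g x + β * h x) < r' ^ 2 *
          chiReg g h G β (fun y => g y + β * h y) x r') :=
  cl_stability_under_perturbation_general g h G hg_nonneg hh_nonneg hh_sub x r hr ε hε1 r' hr' hy gl
    gu hu LL hgl hgu hhu hLL hbddg hbddh hbddL hLpos hhx A B Cc D Δ hA hB hCc hD hΔ
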